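/- Let $(\theta_n)_{n \geq c}$ be a sequence of positive real numbers with $\lim_{n\to\infty} \theta_{n+1}/\theta_n = \xi > 1$, and set $\theta_n = 0$ for $n < c$. Define $r_n = \sum_{j \geq 0} (-1)^j \theta_{n-1-j}/\theta_n$ (a finite sum since $\theta_m = 0$ for $m < c$). Then $\lim_{n\to\infty} r_n = 1/(\xi+1)$. -/

import Mathlib

/-!
Writing `a n = θ n / θ (n + 1)`, the alternating sums satisfy `r (n + 1) = a n * (1 - r n)`.
Since `a n → ξ⁻¹ < 1`, this recurrence is eventually a contraction towards its limiting fixed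
point `L = ξ⁻¹ / (1 + ξ⁻¹) = 1 / (ξ + 1)`: the error `e n = r n - L` satisfies
`|e (n + 1)| ≤ q |e n| + δ n` with `q < 1` and `δ n = |a n (1 - L) - L| → 0`.
-/

open Filter Topology

section Contraction

variable {q : ℝ}

theorem le_pow_mul_add_div_of_le_mul_add {u : ℕ → ℝ} {d : ℝ} {N : ℕ} (hq0 : 0 ≤ q)
    (hq1 : q < 1) (hd : 0 ≤ d) (h : ∀ n ≥ N, u (n + 1) ≤ q * u n + d) :
    ∀ n ≥ N, u n ≤ q ^ (n - N) * u N + d / (1 - q) := by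
  have h1q : 0 < 1 - q := sub_pos.2 hq1
  intro n hn
  induction n, hn using Nat.le_induction with
  | base => simpa using div_nonneg hd h1q.le
  | succ n hn ih =>
    calc u (n + 1) ≤ q * u n + d := h n hn
      _ ≤ q * (q ^ (n - N) * u N + d / (1 - q)) + d := by gcongr
      _ = q ^ (n + 1 - N) * u N + d / (1 - q) := by
        rw [Nat.sub_add_comm hn, pow_succ]
        field_simp
        ring

theorem tendsto_zero_of_abs_le_mul_add {e δ : ℕ → ℝ} (hq0 : 0 ≤ q) (hq1 : q < 1)
    (hδ : Tendsto δ atTop (𝓝 0)) (h : ∀ᶠ n in atTop, |e (n + 1)| ≤ q * |e n| + δ n) :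
    Tendsto e atTop (𝓝 0) := by
  rw [Metric.tendsto_nhds]
  intro ε hε
  have h1q : 0 < 1 - q := sub_pos.2 hq1
  set d := (1 - q) * (ε / 2)
  obtain ⟨N, hN⟩ := eventually_atTop.1 (h.and (hδ.eventually_lt_const (by positivity : 0 < d)))
  have hbound := le_pow_mul_add_div_of_le_mul_add (u := fun n => |e n|) hq0 hq1
    (by positivity : 0 ≤ d) fun n hn => (hN n hn).1.trans (by linarith [(hN n hn).2])
  have hgeo : Tendsto (fun n => q ^ (n - N) * |e N|) atTop (𝓝 0) := by
    simpa using ((tendsto_pow_atTop_nhds_zero_of_lt_one hq0 hq1).comp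
      (tendsto_sub_atTop_nat N)).mul_const |e N|
  filter_upwards [eventually_ge_atTop N, hgeo.eventually_lt_const (half_pos hε)]
    with n hn hsmall
  have hd : d / (1 - q) = ε / 2 := mul_div_cancel_left₀ _ h1q.ne'
  rw [Real.dist_0_eq_abs]
  linarith [hbound n hn]

theorem tendsto_of_eq_mul_one_sub {x a : ℕ → ℝ} {α : ℝ} (hα : |α| < 1)
    (ha : Tendsto a atTop (𝓝 α)) (hrec : ∀ᶠ n in atTop, x (n + 1) = a n * (1 - x n)) :
    Tendsto x atTop (𝓝 (α / (1 + α))) := by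
  have hα1 : 0 < 1 + α := by linarith [neg_abs_le α]
  have hfix : α * (1 - α / (1 + α)) - α / (1 + α) = 0 := by field_simp; ring
  set L := α / (1 + α)
  obtain ⟨q, hαq, hq1⟩ := exists_between hα
  rw [← tendsto_sub_nhds_zero_iff]
  refine tendsto_zero_of_abs_le_mul_add (δ := fun n => |a n * (1 - L) - L|)
    ((abs_nonneg α).trans hαq.le) hq1 ?_ ?_
  · simpa [hfix] using ((ha.mul_const (1 - L)).sub_const L).abs
  · filter_upwards [hrec, ha.abs.eventually_lt_const hαq] with n hn hlt
    calc |x (n + 1) - L| = |-a n * (x n - L) + (a n * (1 - L) - L)| := by rw [hn]; ring_nf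
      _ ≤ |a n| * |x n - L| + |a n * (1 - L) - L| := by
        rw [← abs_neg (a n), ← abs_mul]; exact abs_add_le _ _
      _ ≤ q * |x n - L| + |a n * (1 - L) - L| := by gcongr

end Contraction

theorem alternating_sum_succ (θ : ℤ → ℝ) {c n : ℤ} (hn : c ≤ n) :
    ∑ j ∈ Finset.range (n + 1 - c).toNat, (-1 : ℝ) ^ j * θ (n - j) =
      θ n - ∑ j ∈ Finset.range (n - c).toNat, (-1 : ℝ) ^ j * θ (n - 1 - j) := by
  rw [show (n + 1 - c).toNat = (n - c).toNat + 1 by omega, Finset.sum_range_succ',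
    sub_eq_add_neg (θ n), add_comm (θ n), ← Finset.sum_neg_distrib]
  congr 1
  · refine Finset.sum_congr rfl fun j _ => ?_
    push_cast
    ring_nf
  · simp

theorem stmt_0_general (c : ℤ) (θ : ℤ → ℝ) (ξ : ℝ) (hξ : 1 < ξ)
    (hpos : ∀ n : ℤ, c ≤ n → 0 < θ n)
    (hlim : Tendsto (fun n : ℤ => θ (n + 1) / θ n) atTop (nhds ξ))
    (r : ℤ → ℝ)
    (hr : ∀ n : ℤ, r n = ∑ j ∈ Finset.range (n - c).toNat,
      (-1 : ℝ) ^ j * θ (n - 1 - j) / θ n) :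
    Tendsto r atTop (nhds (1 / (ξ + 1))) := by
  have hξ0 : 0 < ξ := by linarith
  have hrec (n : ℤ) (hn : c ≤ n) : r (n + 1) = θ n / θ (n + 1) * (1 - r n) := by
    rw [hr, hr, add_sub_cancel_right, ← Finset.sum_div, ← Finset.sum_div, alternating_sum_succ θ hn]
    field_simp [(hpos n hn).ne']
  have hratio : Tendsto (fun n : ℤ => θ n / θ (n + 1)) atTop (𝓝 ξ⁻¹) :=
    (hlim.inv₀ hξ0.ne').congr fun n => inv_div _ _
  have hlimit : ξ⁻¹ / (1 + ξ⁻¹) = 1 / (ξ + 1) := by field_simp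
  rw [← Nat.map_cast_int_atTop, tendsto_map'_iff, ← hlimit]
  refine tendsto_of_eq_mul_one_sub (a := fun k : ℕ => θ k / θ (k + 1)) ?_
    (hratio.comp tendsto_natCast_atTop_atTop) ?_
  · rw [abs_of_pos (inv_pos.2 hξ0)]
    exact inv_lt_one_of_one_lt₀ hξ
  · filter_upwards [tendsto_natCast_atTop_atTop.eventually (eventually_ge_atTop c)] with k hk
    simpa using hrec k hk

/-- Appendix Lemma (lim): if `θ n > 0` for `n ≥ c`, `θ n = 0` for `n < c`, and
`θ (n+1) / θ n → ξ > 1`, then the alternating sums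
`r n = ∑_{j ≥ 0} (-1)^j θ(n-1-j)/θ n` converge to `1/(ξ+1)`. -/
theorem stmt_0 (c : ℤ) (θ : ℤ → ℝ) (ξ : ℝ) (hξ : 1 < ξ)
    (hpos : ∀ n : ℤ, c ≤ n → 0 < θ n)
    (hzero : ∀ n : ℤ, n < c → θ n = 0)
    (hlim : Tendsto (fun n : ℤ => θ (n + 1) / θ n) atTop (nhds ξ))
    (r : ℤ → ℝ)
    (hr : ∀ n : ℤ, r n = ∑ j ∈ Finset.range (n - c).toNat,
      (-1 : ℝ) ^ j * θ (n - 1 - j) / θ n) :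
    Tendsto r atTop (nhds (1 / (ξ + 1))) :=
  stmt_0_general c θ ξ hξ hpos hlim r hr
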